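/- arXiv:1702.08819 — 4 statements merged into one kernel-verified Lean document; each statement's English description precedes it below -/
import Mathlib

section
/- Consider the building thermal dynamics with constant control inputs q_i ≥ 0 and T_s (GHP system on) and constant outdoor temperature T^o and heat gains Q_i. Then the system has a unique equilibrium point, uniquely determined by the disturbances T^o, Q_i and the control inputs q_i, T_s, and every solution (T_i, T_{fi}, T_{wi})_{i∈N} converges asymptotically to this equilibrium. -/
/-!
Measured from an equilibrium, the deviations obey the homogeneous linear system (`flow`), and the
energy `∑ᵢ (Cᵢ xᵢ² + C_{fi} fᵢ² + λᵢ C_{wi} wᵢ²) / 2`, with pipe-water weight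
`λᵢ = 1 / (1 + c_w qᵢ R_{fwi})`, is a strict Lyapunov function for it: with this weight the
pumping term and the floor–water exchange combine into a negative definite form in each zone,
and the inter-zone coupling only contributes `-∑ (xᵢ - xⱼ)² / R_{ij}` by the symmetry of `R_{ij}`.
Hence the energy decays exponentially and every solution of the homogeneous system tends to zero.
In particular a stationary solution is zero, so the linear map is injective, hence bijective,
which gives existence and uniqueness of the equilibrium.
-/

open Finset Filter Topology

lemma exists_pos_forall_le {ι : Type*} [Finite ι] {a : ι → ℝ} (ha : ∀ i, 0 < a i) :
    ∃ ρ > 0, ∀ i, ρ ≤ a i :=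
  ((eventually_all.2 fun i => eventually_nhdsWithin_of_eventually_nhds
    (eventually_le_nhds (ha i))).and (self_mem_nhdsWithin (s := Set.Ioi (0 : ℝ)))).exists.imp
    fun _ h => ⟨h.2, h.1⟩

lemma tendsto_zero_of_hasDerivAt_le_neg_mul {V V' : ℝ → ℝ} {ρ : ℝ} (hρ : 0 < ρ)
    (hV : ∀ t, 0 ≤ V t) (hV' : ∀ t, HasDerivAt V (V' t) t) (hle : ∀ t, V' t ≤ -ρ * V t) :
    Tendsto V atTop (𝓝 0) := by
  have hbound : ∀ t ≥ 0, V t ≤ V 0 * Real.exp (-ρ * t) := fun t ht => by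
    simpa [gronwallBound_ε0] using le_gronwallBound_of_liminf_deriv_right_le
      (fun x _ => (hV' x).continuousAt.continuousWithinAt)
      (fun x _ _ hr => (hV' x).hasDerivWithinAt.liminf_right_slope_le hr) le_rfl
      (fun x _ => (hle x).trans_eq (add_zero _).symm) t ⟨ht, le_rfl⟩
  have hexp : Tendsto (fun t => V 0 * Real.exp (-ρ * t)) atTop (𝓝 0) := by
    simpa using (Real.tendsto_exp_atBot.comp
      (tendsto_id.const_mul_atTop_of_neg (neg_neg_of_pos hρ))).const_mul (V 0)
  exact tendsto_of_tendsto_of_tendsto_of_le_of_le' tendsto_const_nhds hexp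
    (Eventually.of_forall hV) ((eventually_ge_atTop 0).mono hbound)

lemma tendsto_zero_of_mul_sq_le {α : Type*} {l : Filter α} {g V : α → ℝ} {c : ℝ} (hc : 0 < c)
    (hV : Tendsto V l (𝓝 0)) (hg : ∀ t, c * g t ^ 2 ≤ V t) : Tendsto g l (𝓝 0) := by
  have hsq : Tendsto (fun t => g t ^ 2) l (𝓝 0) := by
    refine squeeze_zero (fun t => sq_nonneg _) (fun t => ?_) (by simpa using hV.div_const c)
    rw [le_div_iff₀ hc, mul_comm]
    exact hg t
  rw [tendsto_zero_iff_abs_tendsto_zero]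
  simpa [Function.comp_def, Real.sqrt_sq_eq_abs] using hsq.sqrt

lemma SimpleGraph.sum_mul_sum_neighborFinset_sub_div_nonpos {V : Type*} [Fintype V]
    (G : SimpleGraph V) [DecidableRel G.Adj] {R : V → V → ℝ}
    (hR : ∀ i j, G.Adj i j → 0 < R i j) (hsym : ∀ i j, R i j = R j i) (x : V → ℝ) :
    ∑ i, x i * ∑ j ∈ G.neighborFinset i, (x j - x i) / R i j ≤ 0 := by
  simp_rw [Finset.mul_sum]
  have hswap : ∑ i, ∑ j ∈ G.neighborFinset i, x i * ((x j - x i) / R i j)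
      = ∑ i, ∑ j ∈ G.neighborFinset i, x j * ((x i - x j) / R i j) := by
    refine (Finset.sum_comm' (s' := fun j => G.neighborFinset j) (t' := univ)
      fun i j => by simp [G.adj_comm]).trans ?_
    exact Finset.sum_congr rfl fun i _ => Finset.sum_congr rfl fun j _ => by rw [hsym]
  have hpair : ∀ i, ∀ j ∈ G.neighborFinset i,
      x i * ((x j - x i) / R i j) + x j * ((x i - x j) / R i j) ≤ 0 := fun i j hj => by
    have := hR i j ((G.mem_neighborFinset i j).1 hj)
    have : 0 ≤ (x i - x j) ^ 2 / R i j := by positivity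
    linarith [show x i * ((x j - x i) / R i j) + x j * ((x i - x j) / R i j)
      = -((x i - x j) ^ 2 / R i j) by ring]
  have : ∑ i, ∑ j ∈ G.neighborFinset i,
      (x i * ((x j - x i) / R i j) + x j * ((x i - x j) / R i j)) ≤ 0 :=
    Finset.sum_nonpos fun i _ => Finset.sum_nonpos (hpair i)
  rw [Finset.sum_congr rfl fun i _ => Finset.sum_add_distrib, Finset.sum_add_distrib,
    ← hswap] at this
  linarith

lemma zone_dissipation_le {r a c k : ℝ} (hr : 0 < r) (ha : 0 < a) (hc : 0 < c) (hk : 0 ≤ k) :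
    ∃ ε > 0, ∀ x f w : ℝ,
      x * (-x / r + (f - x) / a) + f * ((x - f) / a + (w - f) / c)
        + (1 + k * c)⁻¹ * w * ((f - w) / c - k * f) ≤ -ε * (x ^ 2 + f ^ 2 + w ^ 2) := by
  have hkc : 0 < 1 + k * c := by positivity
  set μ := min r⁻¹ (min a⁻¹ ((1 + k * c)⁻¹ * c⁻¹))
  have hμ : 0 < μ := lt_min (by positivity) (lt_min (by positivity) (by positivity))
  refine ⟨μ / 7, by positivity, fun x f w => ?_⟩
  have hid : x * (-x / r + (f - x) / a) + f * ((x - f) / a + (w - f) / c)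
        + (1 + k * c)⁻¹ * w * ((f - w) / c - k * f)
      = -(r⁻¹ * x ^ 2 + a⁻¹ * (x - f) ^ 2 + (1 + k * c)⁻¹ * c⁻¹ * (f - w) ^ 2)
        - k * (1 + k * c)⁻¹ * f ^ 2 := by
    field_simp
    ring
  have h1 : μ * x ^ 2 ≤ r⁻¹ * x ^ 2 := by gcongr; exact min_le_left _ _
  have h2 : μ * (x - f) ^ 2 ≤ a⁻¹ * (x - f) ^ 2 := by
    gcongr; exact (min_le_right _ _).trans (min_le_left _ _)
  have h3 : μ * (f - w) ^ 2 ≤ (1 + k * c)⁻¹ * c⁻¹ * (f - w) ^ 2 := by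
    gcongr; exact (min_le_right _ _).trans (min_le_right _ _)
  have h4 : 0 ≤ k * (1 + k * c)⁻¹ * f ^ 2 := by positivity
  -- write `f = x - (x - f)`, `w = f - (f - w)` and use `(u + v)² ≤ 2u² + 2v²`
  have h5 : x ^ 2 + f ^ 2 + w ^ 2 ≤ 7 * (x ^ 2 + (x - f) ^ 2 + (f - w) ^ 2) := by
    nlinarith [sq_nonneg (x + (x - f)), sq_nonneg (f + (f - w))]
  rw [hid]
  nlinarith

namespace Building

abbrev State (ι : Type*) := (ι → ℝ) × (ι → ℝ) × (ι → ℝ)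

lemma State.eq_zero_iff {ι : Type*} {s : State ι} :
    s = 0 ↔ ∀ i, s.1 i = 0 ∧ s.2.1 i = 0 ∧ s.2.2 i = 0 := by
  simp only [Prod.ext_iff, funext_iff, Prod.fst_zero, Prod.snd_zero, Pi.zero_apply, forall_and]

section Energy

variable {ι : Type*} (Rfw k : ι → ℝ)

noncomputable def waterWeight (i : ι) : ℝ := (1 + k i * Rfw i)⁻¹

noncomputable def zoneEnergy (C Cf Cw : ι → ℝ) (s : State ι) (i : ι) : ℝ :=
  (C i * s.1 i ^ 2 + Cf i * s.2.1 i ^ 2 + waterWeight Rfw k i * Cw i * s.2.2 i ^ 2) / 2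

variable {Rfw k} {C Cf Cw : ι → ℝ}

lemma waterWeight_pos (hRfw : ∀ i, 0 < Rfw i) (hk : ∀ i, 0 ≤ k i) (i : ι) :
    0 < waterWeight Rfw k i := by
  have := hRfw i; have := hk i; unfold waterWeight; positivity

lemma zoneEnergy_nonneg (hC : ∀ i, 0 < C i) (hCf : ∀ i, 0 < Cf i) (hCw : ∀ i, 0 < Cw i)
    (hRfw : ∀ i, 0 < Rfw i) (hk : ∀ i, 0 ≤ k i) (s : State ι) (i : ι) :
    0 ≤ zoneEnergy Rfw k C Cf Cw s i := by
  have := hC i; have := hCf i; have := hCw i; have := waterWeight_pos hRfw hk i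
  unfold zoneEnergy; positivity

end Energy

variable {ι : Type*} [Fintype ι] (G : SimpleGraph ι) [DecidableRel G.Adj]
  (Ri Raf Rfw : ι → ℝ) (Rij : ι → ι → ℝ) (k : ι → ℝ)

/-- The right-hand sides of the air, floor and water equations before division by the
capacitances; a state is `(T, T_f, T_w)` and `k i` stands for `c_w q_i`. -/
noncomputable def drift (To : ℝ) (Q : ι → ℝ) (Ts : ℝ) (s : State ι) : State ι :=
  (fun i => (To - s.1 i) / Ri i + ∑ j ∈ G.neighborFinset i, (s.1 j - s.1 i) / Rij i j
      + (s.2.1 i - s.1 i) / Raf i + Q i,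
    fun i => (s.1 i - s.2.1 i) / Raf i + (s.2.2 i - s.2.1 i) / Rfw i,
    fun i => (s.2.1 i - s.2.2 i) / Rfw i + k i * (Ts - s.2.1 i))

noncomputable def flow : State ι →ₗ[ℝ] State ι where
  toFun := drift G Ri Raf Rfw Rij k 0 0 0
  map_add' s s' := by
    ext i <;> simp only [drift, Prod.fst_add, Prod.snd_add, Pi.add_apply, Pi.zero_apply,
      add_sub_add_comm, add_div, Finset.sum_add_distrib] <;> ring
  map_smul' c s := by
    ext i <;> simp only [drift, Prod.smul_fst, Prod.smul_snd, Pi.smul_apply, Pi.zero_apply,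
      smul_eq_mul, RingHom.id_apply, ← mul_sub, mul_div_assoc, ← Finset.mul_sum] <;> ring

lemma drift_sub (To : ℝ) (Q : ι → ℝ) (Ts : ℝ) (s s' : State ι) :
    drift G Ri Raf Rfw Rij k To Q Ts s - drift G Ri Raf Rfw Rij k To Q Ts s'
      = flow G Ri Raf Rfw Rij k (s - s') := by
  ext i <;> simp only [flow, drift, LinearMap.coe_mk, AddHom.coe_mk, Prod.fst_sub, Prod.snd_sub,
    Pi.sub_apply, Pi.zero_apply, sub_sub_sub_comm, sub_div, Finset.sum_sub_distrib] <;> ring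

noncomputable def energy (C Cf Cw : ι → ℝ) (s : State ι) : ℝ :=
  ∑ i, zoneEnergy Rfw k C Cf Cw s i

noncomputable def dissipation (s : State ι) : ℝ :=
  let F := flow G Ri Raf Rfw Rij k s
  ∑ i, (s.1 i * F.1 i + s.2.1 i * F.2.1 i + waterWeight Rfw k i * s.2.2 i * F.2.2 i)

lemma dissipation_eq (s : State ι) :
    dissipation G Ri Raf Rfw Rij k s
      = ∑ i, s.1 i * ∑ j ∈ G.neighborFinset i, (s.1 j - s.1 i) / Rij i j
        + ∑ i, (s.1 i * (-s.1 i / Ri i + (s.2.1 i - s.1 i) / Raf i)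
          + s.2.1 i * ((s.1 i - s.2.1 i) / Raf i + (s.2.2 i - s.2.1 i) / Rfw i)
          + (1 + k i * Rfw i)⁻¹ * s.2.2 i * ((s.2.1 i - s.2.2 i) / Rfw i - k i * s.2.1 i)) := by
  rw [← Finset.sum_add_distrib]
  refine Finset.sum_congr rfl fun i _ => ?_
  simp only [flow, drift, waterWeight, LinearMap.coe_mk, AddHom.coe_mk, Pi.zero_apply]
  ring

variable {G Ri Raf Rfw Rij k} {C Cf Cw : ι → ℝ}

lemma exists_dissipation_le_neg_mul_energy
    (hC : ∀ i, 0 < C i) (hCf : ∀ i, 0 < Cf i) (hCw : ∀ i, 0 < Cw i)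
    (hRi : ∀ i, 0 < Ri i) (hRaf : ∀ i, 0 < Raf i) (hRfw : ∀ i, 0 < Rfw i)
    (hRij : ∀ i j, G.Adj i j → 0 < Rij i j) (hRsym : ∀ i j, Rij i j = Rij j i)
    (hk : ∀ i, 0 ≤ k i) :
    ∃ ρ > 0, ∀ s, dissipation G Ri Raf Rfw Rij k s ≤ -ρ * energy Rfw k C Cf Cw s := by
  choose ε hε hzone using fun i => zone_dissipation_le (hRi i) (hRaf i) (hRfw i) (hk i)
  have hcap : ∀ i, 0 < C i + Cf i + waterWeight Rfw k i * Cw i := fun i => by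
    have := hC i; have := hCf i; have := hCw i; have := waterWeight_pos hRfw hk i; positivity
  obtain ⟨ρ, hρ, hρε⟩ := exists_pos_forall_le
    (a := fun i => 2 * ε i / (C i + Cf i + waterWeight Rfw k i * Cw i))
    fun i => div_pos (mul_pos two_pos (hε i)) (hcap i)
  refine ⟨ρ, hρ, fun s => ?_⟩
  have hzone_energy : ∀ i, s.1 i * (-s.1 i / Ri i + (s.2.1 i - s.1 i) / Raf i)
          + s.2.1 i * ((s.1 i - s.2.1 i) / Raf i + (s.2.2 i - s.2.1 i) / Rfw i)
          + (1 + k i * Rfw i)⁻¹ * s.2.2 i * ((s.2.1 i - s.2.2 i) / Rfw i - k i * s.2.1 i)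
        ≤ -(ρ * zoneEnergy Rfw k C Cf Cw s i) := fun i => by
    refine (hzone i _ _ _).trans ?_
    have hw := waterWeight_pos hRfw hk i
    have h1 : C i * s.1 i ^ 2 + Cf i * s.2.1 i ^ 2 + waterWeight Rfw k i * Cw i * s.2.2 i ^ 2
        ≤ (C i + Cf i + waterWeight Rfw k i * Cw i) * (s.1 i ^ 2 + s.2.1 i ^ 2 + s.2.2 i ^ 2) := by
      nlinarith [mul_nonneg (hC i).le (add_nonneg (sq_nonneg (s.2.1 i)) (sq_nonneg (s.2.2 i))),
        mul_nonneg (hCf i).le (add_nonneg (sq_nonneg (s.1 i)) (sq_nonneg (s.2.2 i))),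
        mul_nonneg (mul_pos hw (hCw i)).le (add_nonneg (sq_nonneg (s.1 i)) (sq_nonneg (s.2.1 i)))]
    have h2 := mul_le_mul_of_nonneg_right ((le_div_iff₀ (hcap i)).1 (hρε i))
      (by positivity : 0 ≤ s.1 i ^ 2 + s.2.1 i ^ 2 + s.2.2 i ^ 2)
    unfold zoneEnergy
    nlinarith [mul_le_mul_of_nonneg_left h1 hρ.le]
  have hgraph := G.sum_mul_sum_neighborFinset_sub_div_nonpos hRij hRsym s.1
  have hzones := Finset.sum_le_sum fun i (_ : i ∈ Finset.univ) => hzone_energy i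
  rw [Finset.sum_neg_distrib] at hzones
  rw [dissipation_eq, energy, neg_mul, Finset.mul_sum]
  linarith

lemma hasDerivAt_energy (hC : ∀ i, 0 < C i) (hCf : ∀ i, 0 < Cf i) (hCw : ∀ i, 0 < Cw i)
    {e : ℝ → State ι}
    (he₁ : ∀ i t, HasDerivAt (fun τ => (e τ).1 i) ((flow G Ri Raf Rfw Rij k (e t)).1 i / C i) t)
    (he₂ : ∀ i t, HasDerivAt (fun τ => (e τ).2.1 i)
      ((flow G Ri Raf Rfw Rij k (e t)).2.1 i / Cf i) t)
    (he₃ : ∀ i t, HasDerivAt (fun τ => (e τ).2.2 i)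
      ((flow G Ri Raf Rfw Rij k (e t)).2.2 i / Cw i) t) (t : ℝ) :
    HasDerivAt (fun τ => energy Rfw k C Cf Cw (e τ)) (dissipation G Ri Raf Rfw Rij k (e t)) t := by
  refine HasDerivAt.fun_sum fun i _ => ?_
  refine (((((he₁ i t).pow 2).const_mul (C i)).add (((he₂ i t).pow 2).const_mul (Cf i))).add
    (((he₃ i t).pow 2).const_mul (waterWeight Rfw k i * Cw i))).div_const 2 |>.congr_deriv ?_
  have := (hC i).ne'; have := (hCf i).ne'; have := (hCw i).ne'
  field_simp
  ring

lemma tendsto_zero_of_hasDerivAt_flow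
    (hC : ∀ i, 0 < C i) (hCf : ∀ i, 0 < Cf i) (hCw : ∀ i, 0 < Cw i)
    (hRi : ∀ i, 0 < Ri i) (hRaf : ∀ i, 0 < Raf i) (hRfw : ∀ i, 0 < Rfw i)
    (hRij : ∀ i j, G.Adj i j → 0 < Rij i j) (hRsym : ∀ i j, Rij i j = Rij j i)
    (hk : ∀ i, 0 ≤ k i) {e : ℝ → State ι}
    (he₁ : ∀ i t, HasDerivAt (fun τ => (e τ).1 i) ((flow G Ri Raf Rfw Rij k (e t)).1 i / C i) t)
    (he₂ : ∀ i t, HasDerivAt (fun τ => (e τ).2.1 i)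
      ((flow G Ri Raf Rfw Rij k (e t)).2.1 i / Cf i) t)
    (he₃ : ∀ i t, HasDerivAt (fun τ => (e τ).2.2 i)
      ((flow G Ri Raf Rfw Rij k (e t)).2.2 i / Cw i) t) (i : ι) :
    Tendsto (fun t => (e t).1 i) atTop (𝓝 0) ∧ Tendsto (fun t => (e t).2.1 i) atTop (𝓝 0) ∧
      Tendsto (fun t => (e t).2.2 i) atTop (𝓝 0) := by
  obtain ⟨ρ, hρ, hdiss⟩ :=
    exists_dissipation_le_neg_mul_energy hC hCf hCw hRi hRaf hRfw hRij hRsym hk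
  have hE : Tendsto (fun t => energy Rfw k C Cf Cw (e t)) atTop (𝓝 0) :=
    tendsto_zero_of_hasDerivAt_le_neg_mul hρ
      (fun t => Finset.sum_nonneg fun j _ => zoneEnergy_nonneg hC hCf hCw hRfw hk (e t) j)
      (hasDerivAt_energy hC hCf hCw he₁ he₂ he₃) fun t => hdiss (e t)
  have hzone : ∀ t, zoneEnergy Rfw k C Cf Cw (e t) i ≤ energy Rfw k C Cf Cw (e t) := fun t =>
    Finset.single_le_sum (fun j _ => zoneEnergy_nonneg hC hCf hCw hRfw hk (e t) j)
      (Finset.mem_univ i)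
  have := hC i; have := hCf i; have := hCw i; have := waterWeight_pos hRfw hk i
  refine ⟨tendsto_zero_of_mul_sq_le (c := C i / 2) (by positivity) hE fun t => ?_,
    tendsto_zero_of_mul_sq_le (c := Cf i / 2) (by positivity) hE fun t => ?_,
    tendsto_zero_of_mul_sq_le (c := waterWeight Rfw k i * Cw i / 2) (by positivity) hE
      fun t => ?_⟩ <;>
  · refine le_trans ?_ (hzone t)
    unfold zoneEnergy
    nlinarith [mul_nonneg (hC i).le (sq_nonneg ((e t).1 i)),
      mul_nonneg (hCf i).le (sq_nonneg ((e t).2.1 i)),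
      mul_nonneg (mul_pos (waterWeight_pos hRfw hk i) (hCw i)).le (sq_nonneg ((e t).2.2 i))]

lemma flow_injective (hRi : ∀ i, 0 < Ri i) (hRaf : ∀ i, 0 < Raf i) (hRfw : ∀ i, 0 < Rfw i)
    (hRij : ∀ i j, G.Adj i j → 0 < Rij i j) (hRsym : ∀ i j, Rij i j = Rij j i)
    (hk : ∀ i, 0 ≤ k i) :
    Function.Injective (flow G Ri Raf Rfw Rij k) := by
  refine (injective_iff_map_eq_zero _).2 fun s hs => ?_
  -- the constant trajectory at `s` solves the homogeneous system, so it tends to zero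
  have hconst := tendsto_zero_of_hasDerivAt_flow (C := 1) (Cf := 1) (Cw := 1) (e := fun _ => s)
    (fun _ => one_pos) (fun _ => one_pos) (fun _ => one_pos) hRi hRaf hRfw hRij hRsym hk
    (fun i t => by simpa [hs] using hasDerivAt_const t (s.1 i))
    (fun i t => by simpa [hs] using hasDerivAt_const t (s.2.1 i))
    (fun i t => by simpa [hs] using hasDerivAt_const t (s.2.2 i))
  exact State.eq_zero_iff.2 fun i => ⟨tendsto_nhds_unique tendsto_const_nhds (hconst i).1,
    tendsto_nhds_unique tendsto_const_nhds (hconst i).2.1,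
    tendsto_nhds_unique tendsto_const_nhds (hconst i).2.2⟩

lemma existsUnique_drift_eq_zero (hRi : ∀ i, 0 < Ri i) (hRaf : ∀ i, 0 < Raf i)
    (hRfw : ∀ i, 0 < Rfw i) (hRij : ∀ i j, G.Adj i j → 0 < Rij i j)
    (hRsym : ∀ i j, Rij i j = Rij j i) (hk : ∀ i, 0 ≤ k i) (To : ℝ) (Q : ι → ℝ) (Ts : ℝ) :
    ∃! s, drift G Ri Raf Rfw Rij k To Q Ts s = 0 := by
  have hinj := flow_injective hRi hRaf hRfw hRij hRsym hk
  obtain ⟨s, hs⟩ := LinearMap.injective_iff_surjective.1 hinj (-drift G Ri Raf Rfw Rij k To Q Ts 0)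
  have hs0 : drift G Ri Raf Rfw Rij k To Q Ts s = 0 := by
    have := drift_sub G Ri Raf Rfw Rij k To Q Ts s 0
    rwa [sub_zero, hs, sub_eq_neg_self] at this
  refine ⟨s, hs0, fun s' hs' => hinj ?_⟩
  rw [← sub_eq_zero, ← map_sub, ← drift_sub, hs', hs0, sub_zero]

lemma tendsto_of_hasDerivAt_drift
    (hC : ∀ i, 0 < C i) (hCf : ∀ i, 0 < Cf i) (hCw : ∀ i, 0 < Cw i)
    (hRi : ∀ i, 0 < Ri i) (hRaf : ∀ i, 0 < Raf i) (hRfw : ∀ i, 0 < Rfw i)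
    (hRij : ∀ i j, G.Adj i j → 0 < Rij i j) (hRsym : ∀ i j, Rij i j = Rij j i)
    (hk : ∀ i, 0 ≤ k i) {To : ℝ} {Q : ι → ℝ} {Ts : ℝ} {se : State ι}
    (hse : drift G Ri Raf Rfw Rij k To Q Ts se = 0) {s : ℝ → State ι}
    (hs₁ : ∀ i t, HasDerivAt (fun τ => (s τ).1 i)
      ((drift G Ri Raf Rfw Rij k To Q Ts (s t)).1 i / C i) t)
    (hs₂ : ∀ i t, HasDerivAt (fun τ => (s τ).2.1 i)
      ((drift G Ri Raf Rfw Rij k To Q Ts (s t)).2.1 i / Cf i) t)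
    (hs₃ : ∀ i t, HasDerivAt (fun τ => (s τ).2.2 i)
      ((drift G Ri Raf Rfw Rij k To Q Ts (s t)).2.2 i / Cw i) t) (i : ι) :
    Tendsto (fun t => (s t).1 i) atTop (𝓝 (se.1 i)) ∧
      Tendsto (fun t => (s t).2.1 i) atTop (𝓝 (se.2.1 i)) ∧
      Tendsto (fun t => (s t).2.2 i) atTop (𝓝 (se.2.2 i)) := by
  have hdev : ∀ t, drift G Ri Raf Rfw Rij k To Q Ts (s t) = flow G Ri Raf Rfw Rij k (s t - se) :=
    fun t => by rw [← drift_sub, hse, sub_zero]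
  obtain ⟨h₁, h₂, h₃⟩ := tendsto_zero_of_hasDerivAt_flow (e := fun t => s t - se)
    hC hCf hCw hRi hRaf hRfw hRij hRsym hk
    (fun i t => by simpa [hdev] using (hs₁ i t).sub_const (se.1 i))
    (fun i t => by simpa [hdev] using (hs₂ i t).sub_const (se.2.1 i))
    (fun i t => by simpa [hdev] using (hs₃ i t).sub_const (se.2.2 i)) i
  exact ⟨by simpa using h₁.add_const (se.1 i), by simpa using h₂.add_const (se.2.1 i),
    by simpa using h₃.add_const (se.2.2 i)⟩

end Building

theorem stmt_1_general
    (n : ℕ)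
    (G : SimpleGraph (Fin n)) [DecidableRel G.Adj]
    (C Cf Cw Ri Raf Rfw : Fin n → ℝ) (Rij : Fin n → Fin n → ℝ)
    (hC : ∀ i, 0 < C i) (hCf : ∀ i, 0 < Cf i) (hCw : ∀ i, 0 < Cw i)
    (hRi : ∀ i, 0 < Ri i) (hRaf : ∀ i, 0 < Raf i) (hRfw : ∀ i, 0 < Rfw i)
    (hRij : ∀ i j, G.Adj i j → 0 < Rij i j)
    (hRsym : ∀ i j, Rij i j = Rij j i)
    (cw : ℝ) (hcw : 0 < cw)
    (q : Fin n → ℝ) (hq : ∀ i, 0 ≤ q i) (Ts : ℝ)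
    (To : ℝ) (Q : Fin n → ℝ) :
    ∃ Te Tfe Twe : Fin n → ℝ,
      -- `(Te, Tfe, Twe)` is an equilibrium of the dynamics with inputs `q`, `Ts`
      (∀ i,
        (To - Te i) / Ri i
            + (∑ j ∈ G.neighborFinset i, (Te j - Te i) / Rij i j)
            + (Tfe i - Te i) / Raf i + Q i = 0 ∧
        (Te i - Tfe i) / Raf i + (Twe i - Tfe i) / Rfw i = 0 ∧
        (Tfe i - Twe i) / Rfw i + cw * q i * (Ts - Tfe i) = 0) ∧
      -- the equilibrium is unique
      (∀ Te' Tfe' Twe' : Fin n → ℝ,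
        (∀ i,
          (To - Te' i) / Ri i
              + (∑ j ∈ G.neighborFinset i, (Te' j - Te' i) / Rij i j)
              + (Tfe' i - Te' i) / Raf i + Q i = 0 ∧
          (Te' i - Tfe' i) / Raf i + (Twe' i - Tfe' i) / Rfw i = 0 ∧
          (Tfe' i - Twe' i) / Rfw i + cw * q i * (Ts - Tfe' i) = 0) →
        Te' = Te ∧ Tfe' = Tfe ∧ Twe' = Twe) ∧
      -- every solution of the dynamics converges asymptotically to the equilibrium
      (∀ T Tf Tw : ℝ → Fin n → ℝ,
        (∀ i t, HasDerivAt (fun τ => T τ i)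
            (((To - T t i) / Ri i
                + (∑ j ∈ G.neighborFinset i, (T t j - T t i) / Rij i j)
                + (Tf t i - T t i) / Raf i + Q i) / C i) t) →
        (∀ i t, HasDerivAt (fun τ => Tf τ i)
            (((T t i - Tf t i) / Raf i + (Tw t i - Tf t i) / Rfw i) / Cf i) t) →
        (∀ i t, HasDerivAt (fun τ => Tw τ i)
            (((Tf t i - Tw t i) / Rfw i + cw * q i * (Ts - Tf t i)) / Cw i) t) →
        ∀ i,
          Tendsto (fun t => T t i) atTop (𝓝 (Te i)) ∧
          Tendsto (fun t => Tf t i) atTop (𝓝 (Tfe i)) ∧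
          Tendsto (fun t => Tw t i) atTop (𝓝 (Twe i))) := by
  have hk : ∀ i, 0 ≤ cw * q i := fun i => mul_nonneg hcw.le (hq i)
  obtain ⟨se, hse, huniq⟩ := Building.existsUnique_drift_eq_zero (G := G) (Rij := Rij)
    hRi hRaf hRfw hRij hRsym hk To Q Ts
  refine ⟨se.1, se.2.1, se.2.2, Building.State.eq_zero_iff.1 hse, fun Te' Tfe' Twe' h' => ?_,
    fun T Tf Tw hT hTf hTw => Building.tendsto_of_hasDerivAt_drift hC hCf hCw hRi hRaf hRfw
      hRij hRsym hk hse (s := fun t => (T t, Tf t, Tw t)) hT hTf hTw⟩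
  obtain rfl := huniq (Te', Tfe', Twe') (Building.State.eq_zero_iff.2 h')
  exact ⟨rfl, rfl, rfl⟩

/-- With the GHP system on (constant flow rates `qᵢ ≥ 0` and supply
temperature `Ts`) and constant outdoor temperature `To` and heat gains `Qᵢ`, the building
thermal dynamics has a unique equilibrium point (determined by `To`, `Qᵢ`, `qᵢ`, `Ts`), and
every solution `(Tᵢ, T_{fi}, T_{wi})` converges asymptotically to this equilibrium. -/
theorem stmt_1
    (n : ℕ) (hn : 0 < n)
    (G : SimpleGraph (Fin n)) [DecidableRel G.Adj] (hG : G.Connected)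
    (C Cf Cw Ri Raf Rfw : Fin n → ℝ) (Rij : Fin n → Fin n → ℝ)
    (hC : ∀ i, 0 < C i) (hCf : ∀ i, 0 < Cf i) (hCw : ∀ i, 0 < Cw i)
    (hRi : ∀ i, 0 < Ri i) (hRaf : ∀ i, 0 < Raf i) (hRfw : ∀ i, 0 < Rfw i)
    (hRij : ∀ i j, G.Adj i j → 0 < Rij i j)
    (hRsym : ∀ i j, Rij i j = Rij j i)
    (cw : ℝ) (hcw : 0 < cw)
    (q : Fin n → ℝ) (hq : ∀ i, 0 ≤ q i) (Ts : ℝ)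
    (To : ℝ) (Q : Fin n → ℝ) :
    ∃ Te Tfe Twe : Fin n → ℝ,
      -- `(Te, Tfe, Twe)` is an equilibrium of the dynamics with inputs `q`, `Ts`
      (∀ i,
        (To - Te i) / Ri i
            + (∑ j ∈ G.neighborFinset i, (Te j - Te i) / Rij i j)
            + (Tfe i - Te i) / Raf i + Q i = 0 ∧
        (Te i - Tfe i) / Raf i + (Twe i - Tfe i) / Rfw i = 0 ∧
        (Tfe i - Twe i) / Rfw i + cw * q i * (Ts - Tfe i) = 0) ∧
      -- the equilibrium is unique
      (∀ Te' Tfe' Twe' : Fin n → ℝ,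
        (∀ i,
          (To - Te' i) / Ri i
              + (∑ j ∈ G.neighborFinset i, (Te' j - Te' i) / Rij i j)
              + (Tfe' i - Te' i) / Raf i + Q i = 0 ∧
          (Te' i - Tfe' i) / Raf i + (Twe' i - Tfe' i) / Rfw i = 0 ∧
          (Tfe' i - Twe' i) / Rfw i + cw * q i * (Ts - Tfe' i) = 0) →
        Te' = Te ∧ Tfe' = Tfe ∧ Twe' = Twe) ∧
      -- every solution of the dynamics converges asymptotically to the equilibrium
      (∀ T Tf Tw : ℝ → Fin n → ℝ,
        (∀ i t, HasDerivAt (fun τ => T τ i)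
            (((To - T t i) / Ri i
                + (∑ j ∈ G.neighborFinset i, (T t j - T t i) / Rij i j)
                + (Tf t i - T t i) / Raf i + Q i) / C i) t) →
        (∀ i t, HasDerivAt (fun τ => Tf τ i)
            (((T t i - Tf t i) / Raf i + (Tw t i - Tf t i) / Rfw i) / Cf i) t) →
        (∀ i t, HasDerivAt (fun τ => Tw τ i)
            (((Tf t i - Tw t i) / Rfw i + cw * q i * (Ts - Tf t i)) / Cw i) t) →
        ∀ i,
          Tendsto (fun t => T t i) atTop (𝓝 (Te i)) ∧
          Tendsto (fun t => Tf t i) atTop (𝓝 (Tfe i)) ∧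
          Tendsto (fun t => Tw t i) atTop (𝓝 (Twe i))) :=
  stmt_1_general n G C Cf Cw Ri Raf Rfw Rij hC hCf hCw hRi hRaf hRfw hRij hRsym cw hcw q hq Ts To Q
end

section
/- For any constants T^o ∈ ℝ, Q_i ∈ ℝ, T_s ∈ ℝ and q_i ≥ 0, the steady-state equations of the building thermal dynamics, namely (T^o − T_i)/R_i + Σ_{j∈N(i)} (T_j − T_i)/R_{ij} + (T_{fi} − T_i)/R_{afi} + Q_i = 0, (T_i − T_{fi})/R_{afi} + (T_{wi} − T_{fi})/R_{fwi} = 0, and (T_{fi} − T_{wi})/R_{fwi} + c_w q_i (T_s − T_{fi}) = 0 for all i ∈ N, have exactly one solution (T_i, T_{fi}, T_{wi})_{i∈N}. -/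
open Finset

section aux
variable {n : ℕ} (G : SimpleGraph (Fin n)) [DecidableRel G.Adj]
  (Ri Raf Rfw : Fin n → ℝ) (Rij : Fin n → Fin n → ℝ) (cw : ℝ) (q : Fin n → ℝ)

noncomputable def bL :
    ((Fin n → ℝ) × (Fin n → ℝ) × (Fin n → ℝ)) →ₗ[ℝ]
      ((Fin n → ℝ) × (Fin n → ℝ) × (Fin n → ℝ)) where
  toFun x :=
    (fun i => -(x.1 i) / Ri i + (∑ j ∈ G.neighborFinset i, (x.1 j - x.1 i) / Rij i j)
        + (x.2.1 i - x.1 i) / Raf i,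
     fun i => (x.1 i - x.2.1 i) / Raf i + (x.2.2 i - x.2.1 i) / Rfw i,
     fun i => (x.2.1 i - x.2.2 i) / Rfw i - cw * q i * x.2.1 i)
  map_add' x y := by
    refine Prod.ext (funext fun i => ?_) (Prod.ext (funext fun i => ?_) (funext fun i => ?_)) <;>
      simp only [Prod.fst_add, Prod.snd_add, Pi.add_apply]
    · rw [show (∑ j ∈ G.neighborFinset i, ((x.1 j + y.1 j) - (x.1 i + y.1 i)) / Rij i j)
          = ∑ j ∈ G.neighborFinset i, ((x.1 j - x.1 i)/Rij i j + (y.1 j - y.1 i)/Rij i j) from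
          Finset.sum_congr rfl (fun j _ => by ring), Finset.sum_add_distrib]
      ring
    · ring
    · ring
  map_smul' c x := by
    refine Prod.ext (funext fun i => ?_) (Prod.ext (funext fun i => ?_) (funext fun i => ?_)) <;>
      simp only [Prod.smul_fst, Prod.smul_snd, Pi.smul_apply, smul_eq_mul, RingHom.id_apply]
    · rw [show (∑ j ∈ G.neighborFinset i, (c * x.1 j - c * x.1 i) / Rij i j)
          = ∑ j ∈ G.neighborFinset i, c * ((x.1 j - x.1 i)/Rij i j) from
          Finset.sum_congr rfl (fun j _ => by ring), ← Finset.mul_sum]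
      ring
    · ring
    · ring

end aux

lemma bL_inj {n : ℕ} (hn : 0 < n) (G : SimpleGraph (Fin n)) [DecidableRel G.Adj]
    (Ri Raf Rfw : Fin n → ℝ) (Rij : Fin n → Fin n → ℝ) (cw : ℝ) (q : Fin n → ℝ)
    (hRi : ∀ i, 0 < Ri i) (hRaf : ∀ i, 0 < Raf i) (hRfw : ∀ i, 0 < Rfw i)
    (hRij : ∀ i j, G.Adj i j → 0 < Rij i j) (hcw : 0 < cw) (hq : ∀ i, 0 ≤ q i) :
    Function.Injective (bL G Ri Raf Rfw Rij cw q) := by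
  rw [← LinearMap.ker_eq_bot, LinearMap.ker_eq_bot']
  intro x hx
  obtain ⟨T, Tf, Tw⟩ := x
  have h1 : ∀ i, -(T i) / Ri i + (∑ j ∈ G.neighborFinset i, (T j - T i) / Rij i j)
      + (Tf i - T i) / Raf i = 0 := fun i => congrFun (congrArg Prod.fst hx) i
  have h2 : ∀ i, (T i - Tf i) / Raf i + (Tw i - Tf i) / Rfw i = 0 :=
    fun i => congrFun (congrArg (fun z => z.2.1) hx) i
  have h3 : ∀ i, (Tf i - Tw i) / Rfw i - cw * q i * Tf i = 0 :=
    fun i => congrFun (congrArg (fun z => z.2.2) hx) i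
  have hk : ∀ i, 0 < 1 + Raf i * (cw * q i) := fun i => by
    have := mul_nonneg (hRaf i).le (mul_nonneg hcw.le (hq i)); linarith
  -- From h2 + h3 : T i = Tf i * (1 + Raf i * cw * q i)
  have hkey : ∀ i, T i = Tf i * (1 + Raf i * (cw * q i)) := by
    intro i
    have a := h2 i; have b := h3 i
    have h4 : (T i - Tf i) / Raf i = cw * q i * Tf i := by
      have : (Tf i - Tw i) / Rfw i = -((Tw i - Tf i) / Rfw i) := by ring
      linarith [a, b, this]
    have hR := (hRaf i).ne'
    field_simp at h4
    linarith [h4]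
  -- consequence for equation 1
  have h5 : ∀ i, T i / Ri i + cw * q i * Tf i
      = ∑ j ∈ G.neighborFinset i, (T j - T i) / Rij i j := by
    intro i
    have a := h1 i
    have hR := (hRaf i).ne'
    have : (Tf i - T i) / Raf i = -(cw * q i * Tf i) := by
      rw [hkey i]; field_simp; ring
    have hneg : -T i / Ri i = -(T i / Ri i) := by ring
    linarith [a, this, hneg]
  -- maximum principle
  have hsign : ∀ i, (0 < T i → 0 < Tf i) ∧ (T i < 0 → Tf i < 0) := by
    intro i
    constructor <;> intro h <;> nlinarith [hkey i, hk i]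
  have hmaxle : ∀ i, (∀ j, T j ≤ T i) → T i ≤ 0 := by
    intro i hmax
    by_contra hcon
    push_neg at hcon
    have hTf := (hsign i).1 hcon
    have hsum : (∑ j ∈ G.neighborFinset i, (T j - T i) / Rij i j) ≤ 0 := by
      refine Finset.sum_nonpos fun j hj => ?_
      have hadj : G.Adj i j := by rwa [G.mem_neighborFinset] at hj
      exact div_nonpos_of_nonpos_of_nonneg (by linarith [hmax j]) (hRij i j hadj).le
    have : 0 < T i / Ri i := div_pos hcon (hRi i)
    nlinarith [h5 i, mul_nonneg (mul_nonneg hcw.le (hq i)) hTf.le]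
  have hminge : ∀ i, (∀ j, T i ≤ T j) → 0 ≤ T i := by
    intro i hmin
    by_contra hcon
    push_neg at hcon
    have hTf := (hsign i).2 hcon
    have hsum : 0 ≤ (∑ j ∈ G.neighborFinset i, (T j - T i) / Rij i j) := by
      refine Finset.sum_nonneg fun j hj => ?_
      have hadj : G.Adj i j := by rwa [G.mem_neighborFinset] at hj
      exact div_nonneg (by linarith [hmin j]) (hRij i j hadj).le
    have : T i / Ri i < 0 := div_neg_of_neg_of_pos hcon (hRi i)
    nlinarith [h5 i, mul_nonneg hcw.le (hq i)]
  obtain ⟨i0, -, hi0⟩ := Finset.exists_max_image Finset.univ T ⟨⟨0, hn⟩, Finset.mem_univ _⟩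
  obtain ⟨i1, -, hi1⟩ := Finset.exists_min_image Finset.univ T ⟨⟨0, hn⟩, Finset.mem_univ _⟩
  have hT0 : ∀ i, T i = 0 := by
    intro i
    have := hmaxle i0 (fun j => hi0 j (Finset.mem_univ _))
    have := hminge i1 (fun j => hi1 j (Finset.mem_univ _))
    have := hi0 i (Finset.mem_univ _)
    have := hi1 i (Finset.mem_univ _)
    linarith
  have hTf0 : ∀ i, Tf i = 0 := by
    intro i
    have := hkey i
    rw [hT0 i] at this
    exact (mul_eq_zero.mp this.symm).resolve_right (hk i).ne'
  have hTw0 : ∀ i, Tw i = 0 := by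
    intro i
    have := h3 i
    rw [hTf0 i] at this
    have hF := (hRfw i).ne'
    field_simp at this
    linarith
  refine Prod.ext (funext hT0) (Prod.ext (funext hTf0) (funext hTw0))

/-- For any constants `To`, `Qᵢ`, `Ts` and `qᵢ ≥ 0`, the steady-state
equations of the building thermal dynamics have exactly one solution
`(Tᵢ, T_{fi}, T_{wi})ᵢ`. -/
theorem stmt_3
    (n : ℕ) (hn : 0 < n)
    (G : SimpleGraph (Fin n)) [DecidableRel G.Adj] (hG : G.Connected)
    (C Cf Cw Ri Raf Rfw : Fin n → ℝ) (Rij : Fin n → Fin n → ℝ)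
    (hC : ∀ i, 0 < C i) (hCf : ∀ i, 0 < Cf i) (hCw : ∀ i, 0 < Cw i)
    (hRi : ∀ i, 0 < Ri i) (hRaf : ∀ i, 0 < Raf i) (hRfw : ∀ i, 0 < Rfw i)
    (hRij : ∀ i j, G.Adj i j → 0 < Rij i j)
    (hRsym : ∀ i j, Rij i j = Rij j i)
    (cw : ℝ) (hcw : 0 < cw)
    (To : ℝ) (Q : Fin n → ℝ) (Ts : ℝ) (q : Fin n → ℝ) (hq : ∀ i, 0 ≤ q i) :
    ∃! TTfTw : (Fin n → ℝ) × (Fin n → ℝ) × (Fin n → ℝ),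
      ∀ i,
        (To - TTfTw.1 i) / Ri i
            + (∑ j ∈ G.neighborFinset i, (TTfTw.1 j - TTfTw.1 i) / Rij i j)
            + (TTfTw.2.1 i - TTfTw.1 i) / Raf i + Q i = 0 ∧
        (TTfTw.1 i - TTfTw.2.1 i) / Raf i + (TTfTw.2.2 i - TTfTw.2.1 i) / Rfw i = 0 ∧
        (TTfTw.2.1 i - TTfTw.2.2 i) / Rfw i + cw * q i * (Ts - TTfTw.2.1 i) = 0 := by
  set L := bL G Ri Raf Rfw Rij cw q with hL
  have hinj := bL_inj hn G Ri Raf Rfw Rij cw q hRi hRaf hRfw hRij hcw hq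
  have hsurj : Function.Surjective L :=
    (LinearMap.injective_iff_surjective).mp hinj
  set v : (Fin n → ℝ) × (Fin n → ℝ) × (Fin n → ℝ) :=
    (fun i => -(To / Ri i + Q i), fun i => (0 : ℝ), fun i => -(cw * q i * Ts)) with hv
  have hiff : ∀ x : (Fin n → ℝ) × (Fin n → ℝ) × (Fin n → ℝ),
      (∀ i,
        (To - x.1 i) / Ri i
            + (∑ j ∈ G.neighborFinset i, (x.1 j - x.1 i) / Rij i j)
            + (x.2.1 i - x.1 i) / Raf i + Q i = 0 ∧
        (x.1 i - x.2.1 i) / Raf i + (x.2.2 i - x.2.1 i) / Rfw i = 0 ∧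
        (x.2.1 i - x.2.2 i) / Rfw i + cw * q i * (Ts - x.2.1 i) = 0) ↔ L x = v := by
    intro x
    have e1 : ∀ i, (To - x.1 i) / Ri i = To / Ri i + -(x.1 i) / Ri i := fun i => by ring
    have e3 : ∀ i, cw * q i * (Ts - x.2.1 i) = cw * q i * Ts - cw * q i * x.2.1 i :=
      fun i => by ring
    constructor
    · intro h
      refine Prod.ext (funext fun i => ?_) (Prod.ext (funext fun i => ?_) (funext fun i => ?_))
      · show -(x.1 i) / Ri i + (∑ j ∈ G.neighborFinset i, (x.1 j - x.1 i) / Rij i j)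
            + (x.2.1 i - x.1 i) / Raf i = -(To / Ri i + Q i)
        linarith [(h i).1, e1 i]
      · exact (h i).2.1
      · show (x.2.1 i - x.2.2 i) / Rfw i - cw * q i * x.2.1 i = -(cw * q i * Ts)
        linarith [(h i).2.2, e3 i]
    · intro h i
      have c1 : -(x.1 i) / Ri i + (∑ j ∈ G.neighborFinset i, (x.1 j - x.1 i) / Rij i j)
            + (x.2.1 i - x.1 i) / Raf i = -(To / Ri i + Q i) :=
        congrFun (congrArg Prod.fst h) i
      have c2 : (x.1 i - x.2.1 i) / Raf i + (x.2.2 i - x.2.1 i) / Rfw i = 0 :=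
        congrFun (congrArg (fun z => z.2.1) h) i
      have c3 : (x.2.1 i - x.2.2 i) / Rfw i - cw * q i * x.2.1 i = -(cw * q i * Ts) :=
        congrFun (congrArg (fun z => z.2.2) h) i
      exact ⟨by linarith [e1 i], c2, by linarith [e3 i]⟩
  obtain ⟨x0, hx0⟩ := hsurj v
  refine ⟨x0, (hiff x0).mpr hx0, fun y hy => hinj ?_⟩
  rw [(hiff y).mp hy, hx0]
end

section
/- Let T_i : ℝ → ℝ (i ∈ N) be differentiable functions satisfying the zone dynamics C_i Ṫ_i = (T^o − T_i)/R_i + Σ_{j∈N(i)} (T_j − T_i)/R_{ij} + (T_{fi} − T_i)/R_{afi} + Q_i, and let ζ_i : ℝ → ℝ satisfy ζ̇_i = k_{ζ_i}((T^o − Z_i)/R_i + Σ_{j∈N(i)} (Z_j − Z_i)/R_{ij} + (Z_{fi} − Z_i)/R_{afi} + Q_i) with k_{ζ_i} > 0, for given functions Z_i, Z_{fi}, T_{fi}. Then the transformed variable ζ̃_i := ζ_i/k_{ζ_i} − C_i T_i satisfies ζ̃̇_i = (T_i − Z_i)/R_i + Σ_{j∈N(i)} ((T_i − Z_i) − (T_j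 − Z_j))/R_{ij} + ((T_i − Z_i) − (T_{fi} − Z_{fi}))/R_{afi}, an expression that involves neither the outdoor temperature T^o nor the heat gains Q_i. -/
open Finset

/-
Differentiating `ζᵢ/k_{ζᵢ} − Cᵢ Tᵢ` divides the gain `k_{ζᵢ}` out of the dual dynamics and
multiplies the capacitance `Cᵢ` out of the zone dynamics, so both right-hand sides appear with
unit weight; the terms `Tᵒ/Rᵢ` and `Qᵢ` enter them identically and cancel in the difference.
-/

theorem HasDerivAt.div_const_sub_const_mul {x z : ℝ → ℝ} {a b c k t : ℝ}
    (hc : c ≠ 0) (hk : k ≠ 0)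
    (hx : HasDerivAt x (a / c) t) (hz : HasDerivAt z (k * b) t) :
    HasDerivAt (fun τ => z τ / k - c * x τ) (b - a) t := by
  have h := (hz.div_const k).sub (hx.const_mul c)
  rwa [mul_div_cancel_left₀ _ hk, mul_div_cancel₀ _ hc] at h

theorem Finset.sum_div_sub_sum_div {ι : Type*} (s : Finset ι) (T Z R : ι → ℝ) (i : ι) :
    ∑ j ∈ s, (Z j - Z i) / R j - ∑ j ∈ s, (T j - T i) / R j
      = ∑ j ∈ s, ((T i - Z i) - (T j - Z j)) / R j := by
  rw [← sum_sub_distrib]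
  exact sum_congr rfl fun j _ => by ring

theorem stmt_15_general
    (n : ℕ)
    (G : SimpleGraph (Fin n)) [DecidableRel G.Adj]
    (C Ri Raf : Fin n → ℝ) (Rij : Fin n → Fin n → ℝ)
    (hC : ∀ i, 0 < C i)
    (To : ℝ) (Q : Fin n → ℝ)
    (kζ : Fin n → ℝ) (hkζ : ∀ i, 0 < kζ i)
    (T Tf Z Zf ζ : ℝ → Fin n → ℝ)
    -- zone dynamics
    (hT : ∀ i t, HasDerivAt (fun τ => T τ i)
        (((To - T t i) / Ri i + (∑ j ∈ G.neighborFinset i, (T t j - T t i) / Rij i j)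
          + (Tf t i - T t i) / Raf i + Q i) / C i) t)
    -- dual dynamics of ζ
    (hζ : ∀ i t, HasDerivAt (fun τ => ζ τ i)
        (kζ i * ((To - Z t i) / Ri i + (∑ j ∈ G.neighborFinset i, (Z t j - Z t i) / Rij i j)
          + (Zf t i - Z t i) / Raf i + Q i)) t) :
    -- the transformed variable ζ̃ᵢ = ζᵢ/kζᵢ − Cᵢ Tᵢ obeys a disturbance-free equation
    ∀ i t, HasDerivAt (fun τ => ζ τ i / kζ i - C i * T τ i)
        ((T t i - Z t i) / Ri i
          + (∑ j ∈ G.neighborFinset i, ((T t i - Z t i) - (T t j - Z t j)) / Rij i j)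
          + ((T t i - Z t i) - (Tf t i - Zf t i)) / Raf i) t := by
  intro i t
  refine (HasDerivAt.div_const_sub_const_mul (hC i).ne' (hkζ i).ne' (hT i t)
    (hζ i t)).congr_deriv ?_
  rw [← sum_div_sub_sum_div]
  ring

/-- Along the zone dynamics and the dual dynamics of `ζᵢ`, the
transformed variable `ζ̃ᵢ = ζᵢ/k_{ζᵢ} − Cᵢ Tᵢ` obeys a differential equation that involves
neither the outdoor temperature `To` nor the heat gains `Qᵢ`. -/
theorem stmt_15
    (n : ℕ)
    (G : SimpleGraph (Fin n)) [DecidableRel G.Adj] (hG : G.Connected)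
    (C Ri Raf : Fin n → ℝ) (Rij : Fin n → Fin n → ℝ)
    (hC : ∀ i, 0 < C i) (hRi : ∀ i, 0 < Ri i) (hRaf : ∀ i, 0 < Raf i)
    (hRij : ∀ i j, G.Adj i j → 0 < Rij i j) (hRsym : ∀ i j, Rij i j = Rij j i)
    (To : ℝ) (Q : Fin n → ℝ)
    (kζ : Fin n → ℝ) (hkζ : ∀ i, 0 < kζ i)
    (T Tf Z Zf ζ : ℝ → Fin n → ℝ)
    -- zone dynamics
    (hT : ∀ i t, HasDerivAt (fun τ => T τ i)
        (((To - T t i) / Ri i + (∑ j ∈ G.neighborFinset i, (T t j - T t i) / Rij i j)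
          + (Tf t i - T t i) / Raf i + Q i) / C i) t)
    -- dual dynamics of ζ
    (hζ : ∀ i t, HasDerivAt (fun τ => ζ τ i)
        (kζ i * ((To - Z t i) / Ri i + (∑ j ∈ G.neighborFinset i, (Z t j - Z t i) / Rij i j)
          + (Zf t i - Z t i) / Raf i + Q i)) t) :
    -- the transformed variable ζ̃ᵢ = ζᵢ/kζᵢ − Cᵢ Tᵢ obeys a disturbance-free equation
    ∀ i t, HasDerivAt (fun τ => ζ τ i / kζ i - C i * T τ i)
        ((T t i - Z t i) / Ri i
          + (∑ j ∈ G.neighborFinset i, ((T t i - Z t i) - (T t j - Z t j)) / Rij i j)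
          + ((T t i - Z t i) - (Tf t i - Zf t i)) / Raf i) t :=
  stmt_15_general n G C Ri Raf Rij hC To Q kζ hkζ T Tf Z Zf ζ hT hζ
end

section
/- Let T^o, Q_i, T_s be constants and suppose the controller state (Z, u, Z_f, ζ, λ, μ^+, μ^-) is at an equilibrium of dynamics (6) (in particular ζ̇_i = 0 and λ̇_i = 0), so that Z satisfies (T^o − Z_i)/R_i + Σ_{j∈N(i)} (Z_j − Z_i)/R_{ij} + (Z_{fi} − Z_i)/R_{afi} + Q_i = 0 and (Z_i − Z_{fi})/R_{afi} + u_i = 0. Let q_i = u_i/(c_w (T_s − Z_{fi})) with T_s ≠ Z_{fi} and q_i ≥ 0, and suppose (T_i, T_{fi}, T_{wi})_{i∈N} is an equilibrium of the plant dynamics (1)-(2) under these constant inputs q_i, T_s, T^o, Q_i. Then T_i = Z_i and T_{fi} = Z_{fi} for every i ∈ N. -/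
open Finset

/-!
Write `e = T - Z` and `f = T_f - Z_f`. Eliminating `T_w` from the plant's floor and water
equations and subtracting the controller's floor equation gives `f = e / (1 + R_{af} c_w q)`;
since `q ≥ 0` this makes `f` a nonnegative multiple of `e`. Subtracting the two zone equations
then shows that the net heat inflow of `e` over the graph is `a_i e_i` with `a_i > 0`. By the
discrete maximum principle such an `e` vanishes: at a maximum the inflow is `≤ 0`, so the
maximum is `≤ 0`, and symmetrically for the minimum.
-/

/-- `-(L e) i` for the graph Laplacian `L` with edge conductances `1 / R i j`. -/
noncomputable def netInflow {ι : Type*} [Fintype ι] (G : SimpleGraph ι) [DecidableRel G.Adj]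
    (R : ι → ι → ℝ) (e : ι → ℝ) (i : ι) : ℝ :=
  ∑ j ∈ G.neighborFinset i, (e j - e i) / R i j

section MaximumPrinciple

variable {ι : Type*} [Fintype ι] (G : SimpleGraph ι) [DecidableRel G.Adj] (R : ι → ι → ℝ)

theorem netInflow_sub (e e' : ι → ℝ) (i : ι) :
    netInflow G R (e - e') i = netInflow G R e i - netInflow G R e' i := by
  simp only [netInflow, ← sum_sub_distrib, Pi.sub_apply]
  exact sum_congr rfl fun j _ => by ring

theorem netInflow_neg (e : ι → ℝ) (i : ι) : netInflow G R (-e) i = -netInflow G R e i := by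
  simp only [netInflow, Pi.neg_apply, ← sum_neg_distrib]
  exact sum_congr rfl fun j _ => by ring

variable {G R}

theorem netInflow_nonpos_of_forall_le (hR : ∀ i j, G.Adj i j → 0 < R i j) {e : ι → ℝ}
    {i : ι} (hi : ∀ j, e j ≤ e i) : netInflow G R e i ≤ 0 :=
  sum_nonpos fun j hj =>
    div_nonpos_of_nonpos_of_nonneg (sub_nonpos.mpr (hi j))
      (hR i j ((G.mem_neighborFinset i j).mp hj)).le

theorem nonpos_of_netInflow_eq_mul (hR : ∀ i j, G.Adj i j → 0 < R i j) {a e : ι → ℝ}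
    (ha : ∀ i, 0 < a i) (h : ∀ i, netInflow G R e i = a i * e i) (i : ι) : e i ≤ 0 := by
  have : Nonempty ι := ⟨i⟩
  obtain ⟨m, hm⟩ := Finite.exists_max e
  have hm_nonpos : a m * e m ≤ 0 := h m ▸ netInflow_nonpos_of_forall_le hR hm
  exact (hm i).trans (nonpos_of_mul_nonpos_right hm_nonpos (ha m))

theorem eq_zero_of_netInflow_eq_mul (hR : ∀ i j, G.Adj i j → 0 < R i j) {a e : ι → ℝ}
    (ha : ∀ i, 0 < a i) (h : ∀ i, netInflow G R e i = a i * e i) : e = 0 := by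
  have hneg : ∀ i, netInflow G R (-e) i = a i * (-e) i := fun i => by
    rw [netInflow_neg, h i, Pi.neg_apply, mul_neg]
  funext i
  have hle : e i ≤ 0 := nonpos_of_netInflow_eq_mul hR ha h i
  have hge : -e i ≤ 0 := nonpos_of_netInflow_eq_mul hR ha hneg i
  exact le_antisymm hle (neg_nonpos.mp hge)

end MaximumPrinciple

section SteadyState

variable {Ri Raf Rfw c To Q Ts T Tf Tw Z Zf NT NZ : ℝ}

theorem floor_balance_of_water_balance (hTf : (T - Tf) / Raf + (Tw - Tf) / Rfw = 0)
    (hTw : (Tf - Tw) / Rfw + c * (Ts - Tf) = 0) : (T - Tf) / Raf + c * (Ts - Tf) = 0 := by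
  linear_combination hTf + hTw

theorem floor_gap_eq (hRaf : 0 < Raf) (hc : 0 ≤ c) (hT : (T - Tf) / Raf + c * (Ts - Tf) = 0)
    (hZ : (Z - Zf) / Raf + c * (Ts - Zf) = 0) : Tf - Zf = (T - Z) / (1 + Raf * c) := by
  have hpos : 0 < 1 + Raf * c := by positivity
  rw [eq_div_iff hpos.ne']
  field_simp at hT hZ
  linear_combination hZ - hT

theorem zone_gap_eq (hRi : 0 < Ri) (hRaf : 0 < Raf) (hc : 0 ≤ c)
    (hT : (To - T) / Ri + NT + (Tf - T) / Raf + Q = 0)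
    (hZ : (To - Z) / Ri + NZ + (Zf - Z) / Raf + Q = 0)
    (hgap : Tf - Zf = (T - Z) / (1 + Raf * c)) :
    NT - NZ = (1 / Ri + c / (1 + Raf * c)) * (T - Z) := by
  have hpos : 0 < 1 + Raf * c := by positivity
  have hdiff : NT - NZ = (T - Z) / Ri + ((T - Z) - (Tf - Zf)) / Raf := by
    linear_combination hT - hZ
  rw [hdiff, hgap]
  field_simp
  ring

end SteadyState

theorem stmt_16_general
    (n : ℕ)
    (G : SimpleGraph (Fin n)) [DecidableRel G.Adj]
    (Ri Raf Rfw : Fin n → ℝ) (Rij : Fin n → Fin n → ℝ)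
    (hRi : ∀ i, 0 < Ri i) (hRaf : ∀ i, 0 < Raf i)
    (hRij : ∀ i j, G.Adj i j → 0 < Rij i j)
    (cw : ℝ) (hcw : 0 < cw)
    (To : ℝ) (Q : Fin n → ℝ) (Ts : ℝ)
    -- controller equilibrium values and multipliers
    (Z u Zf : Fin n → ℝ)
    -- ζ̇ᵢ = 0 : the zone steady-state equation holds for (Z, Z_f)
    (hζeq : ∀ i, (To - Z i) / Ri i + (∑ j ∈ G.neighborFinset i, (Z j - Z i) / Rij i j)
        + (Zf i - Z i) / Raf i + Q i = 0)
    -- λ̇ᵢ = 0 : the floor steady-state equation holds for (Z, u, Z_f)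
    (hlameq : ∀ i, (Z i - Zf i) / Raf i + u i = 0)
    -- the control input
    (q : Fin n → ℝ) (hTsZf : ∀ i, Ts ≠ Zf i)
    (hqdef : ∀ i, q i = u i / (cw * (Ts - Zf i))) (hq : ∀ i, 0 ≤ q i)
    -- plant equilibrium under the constant inputs q, Ts, To, Q
    (T Tf Tw : Fin n → ℝ)
    (hTeq : ∀ i, (To - T i) / Ri i + (∑ j ∈ G.neighborFinset i, (T j - T i) / Rij i j)
        + (Tf i - T i) / Raf i + Q i = 0)
    (hTfeq : ∀ i, (T i - Tf i) / Raf i + (Tw i - Tf i) / Rfw i = 0)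
    (hTweq : ∀ i, (Tf i - Tw i) / Rfw i + cw * q i * (Ts - Tf i) = 0) :
    ∀ i, T i = Z i ∧ Tf i = Zf i := by
  have hc : ∀ i, 0 ≤ cw * q i := fun i => mul_nonneg hcw.le (hq i)
  have hu : ∀ i, u i = cw * q i * (Ts - Zf i) := fun i => by
    have hne : cw * (Ts - Zf i) ≠ 0 := mul_ne_zero hcw.ne' (sub_ne_zero.mpr (hTsZf i))
    rw [hqdef i, mul_comm cw, mul_assoc, div_mul_cancel₀ _ hne]
  have hgap : ∀ i, Tf i - Zf i = (T i - Z i) / (1 + Raf i * (cw * q i)) := fun i =>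
    floor_gap_eq (hRaf i) (hc i) (floor_balance_of_water_balance (hTfeq i) (hTweq i))
      (hu i ▸ hlameq i)
  have he : T - Z = 0 :=
    eq_zero_of_netInflow_eq_mul hRij
      (a := fun i => 1 / Ri i + cw * q i / (1 + Raf i * (cw * q i)))
      (fun i => by have := hRi i; have := hRaf i; have := hc i; positivity)
      (fun i => by
        rw [netInflow_sub]
        exact zone_gap_eq (hRi i) (hRaf i) (hc i) (hTeq i) (hζeq i) (hgap i))
  intro i
  have hei : T i - Z i = 0 := congrFun he i
  have hfi : Tf i - Zf i = 0 := by rw [hgap i, hei, zero_div]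
  exact ⟨sub_eq_zero.mp hei, sub_eq_zero.mp hfi⟩

/-- If the controller is at an equilibrium of dynamics (6) (so that the
steady-state equations of `ζ` and `λ` hold for `(Z, u, Z_f)`), the input is
`qᵢ = uᵢ/(c_w (Ts − Z_{fi}))` with `qᵢ ≥ 0`, and `(T, T_f, T_w)` is an equilibrium of the
plant (1)-(2) under these constant inputs, then `Tᵢ = Zᵢ` and `T_{fi} = Z_{fi}` for all
`i`. -/
theorem stmt_16
    (n : ℕ) (hn : 0 < n)
    (G : SimpleGraph (Fin n)) [DecidableRel G.Adj] (hG : G.Connected)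
    (C Cf Cw Ri Raf Rfw : Fin n → ℝ) (Rij : Fin n → Fin n → ℝ)
    (hC : ∀ i, 0 < C i) (hCf : ∀ i, 0 < Cf i) (hCw : ∀ i, 0 < Cw i)
    (hRi : ∀ i, 0 < Ri i) (hRaf : ∀ i, 0 < Raf i) (hRfw : ∀ i, 0 < Rfw i)
    (hRij : ∀ i j, G.Adj i j → 0 < Rij i j) (hRsym : ∀ i j, Rij i j = Rij j i)
    (cw : ℝ) (hcw : 0 < cw)
    (To : ℝ) (Q : Fin n → ℝ) (Ts : ℝ)
    -- controller equilibrium values and multipliers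
    (Z u Zf : Fin n → ℝ)
    -- ζ̇ᵢ = 0 : the zone steady-state equation holds for (Z, Z_f)
    (hζeq : ∀ i, (To - Z i) / Ri i + (∑ j ∈ G.neighborFinset i, (Z j - Z i) / Rij i j)
        + (Zf i - Z i) / Raf i + Q i = 0)
    -- λ̇ᵢ = 0 : the floor steady-state equation holds for (Z, u, Z_f)
    (hlameq : ∀ i, (Z i - Zf i) / Raf i + u i = 0)
    -- the control input
    (q : Fin n → ℝ) (hTsZf : ∀ i, Ts ≠ Zf i)
    (hqdef : ∀ i, q i = u i / (cw * (Ts - Zf i))) (hq : ∀ i, 0 ≤ q i)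
    -- plant equilibrium under the constant inputs q, Ts, To, Q
    (T Tf Tw : Fin n → ℝ)
    (hTeq : ∀ i, (To - T i) / Ri i + (∑ j ∈ G.neighborFinset i, (T j - T i) / Rij i j)
        + (Tf i - T i) / Raf i + Q i = 0)
    (hTfeq : ∀ i, (T i - Tf i) / Raf i + (Tw i - Tf i) / Rfw i = 0)
    (hTweq : ∀ i, (Tf i - Tw i) / Rfw i + cw * q i * (Ts - Tf i) = 0) :
    ∀ i, T i = Z i ∧ Tf i = Zf i :=
  stmt_16_general n G Ri Raf Rfw Rij hRi hRaf hRij cw hcw To Q Ts Z u Zf hζeq hlameq q hTsZf hqdef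
    hq T Tf Tw hTeq hTfeq hTweq
end
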